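/- Let 0 < r < 1/2 and 0 ≤ a0 < 1/2 be real numbers. If w ∈ ℂ satisfies w^3 - 2a0 w - 2r = 0 (such a w is necessarily nonzero), then h(1/w) ≠ 0. In other words, h(1/w_j) ≠ 0 for every critical point w_j of h (j = 0, 1, 2). -/
import Mathlib


noncomputable section

/-- The rational function `h(w) = r w + a0 + 2 a0 r / w + r² / w²`, as a function of a
complex variable (with real parameters `r`, `a0`). -/
def h (r a0 : ℝ) (w : ℂ) : ℂ :=
  (r:ℂ)*w + (a0:ℂ) + 2*(a0:ℂ)*(r:ℂ)/w + (r:ℂ)^2/w^2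

/-- For `0 < r < 1/2` and `0 ≤ a0 < 1/2`, if `w` is a critical point of `h`
(i.e. a root of `w³ - 2 a0 w - 2r`), then `h(1/w) ≠ 0`. -/
theorem h_nonvanishing_at_inverted_critical_points (r a0 : ℝ)
    (hr0 : 0 < r) (hr1 : r < 1/2) (ha0 : 0 ≤ a0) (ha1 : a0 < 1/2)
    (w : ℂ) (hw : w^3 - 2*(a0:ℂ)*w - 2*(r:ℂ) = 0) :
    h r a0 (1/w) ≠ 0 := by
  have hrC : (r:ℂ) ≠ 0 := by exact_mod_cast hr0.ne'
  have hw0 : w ≠ 0 := by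
    rintro rfl
    simp at hw
    exact hr0.ne' hw
  intro hcontra
  -- multiply h(1/w) = 0 by w^2 : get F(w) = 0 after clearing denominators
  have hF : (r:ℂ) + (a0:ℂ)*w + 2*(a0:ℂ)*(r:ℂ)*w^2 + (r:ℂ)^2*w^3 = 0 := by
    have h1 : (1:ℂ)/w ≠ 0 := one_div_ne_zero hw0
    unfold h at hcontra
    field_simp at hcontra
    linear_combination hcontra
  -- the quadratic Q(w) = 2 a0 r w² + a0 (1+2r²) w + r (1+2r²) vanishes at w
  have hQ : 2*(a0:ℂ)*(r:ℂ)*w^2 + (a0:ℂ)*(1+2*(r:ℂ)^2)*w + (r:ℂ)*(1+2*(r:ℂ)^2) = 0 := by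
    linear_combination hF - (r:ℂ)^2 * hw
  rcases eq_or_lt_of_le ha0 with h0 | ha0pos
  · -- a0 = 0 : Q reduces to r (1+2r²) = 0, impossible
    rw [← h0] at hQ
    push_cast at hQ
    simp at hQ
    rcases hQ with h | h
    · exact absurd h hr0.ne'
    · have : (1:ℝ) + 2*r^2 = 0 := by exact_mod_cast h
      nlinarith
  · -- a0 > 0 : the resultant of the cubic and the quadratic vanishes
    have hres : ((a0:ℂ))^2*(r:ℂ)^5*(4*(1+2*(r:ℂ)^2)^3 - 16*(a0:ℂ)^2*(1+2*(r:ℂ)^2)^2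
        + 128*(a0:ℂ)^3*(r:ℂ)^2) = 0 := by
      linear_combination
        (16*(a0:ℂ)^4*(r:ℂ)^4 + 64*(a0:ℂ)^4*(r:ℂ)^6 + 64*(a0:ℂ)^4*(r:ℂ)^8 + (-4)*(a0:ℂ)^5*(r:ℂ)^2 + (-24)*(a0:ℂ)^5*(r:ℂ)^4 + (-112)*(a0:ℂ)^5*(r:ℂ)^6 + (-32)*(a0:ℂ)^5*(r:ℂ)^8 + 32*(a0:ℂ)^6*(r:ℂ)^4 + 64*(a0:ℂ)^6*(r:ℂ)^6 + 16*w*(a0:ℂ)^4*(r:ℂ)^5 + 32*w*(a0:ℂ)^4*(r:ℂ)^7 + (-8)*w*(a0:ℂ)^5*(r:ℂ)^3 + (-32)*w*(a0:ℂ)^5*(r:ℂ)^5 + (-32)*w*(a0:ℂ)^5*(r:ℂ)^7 + 64*w*(a0:ℂ)^6*(r:ℂ)^5) * hw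
        + (4*(a0:ℂ)^2*(r:ℂ)^4 + 16*(a0:ℂ)^2*(r:ℂ)^6 + 16*(a0:ℂ)^2*(r:ℂ)^8 + 16*(a0:ℂ)^4*(r:ℂ)^4 + 32*(a0:ℂ)^4*(r:ℂ)^6 + (-8)*(a0:ℂ)^5*(r:ℂ)^2 + (-32)*(a0:ℂ)^5*(r:ℂ)^4 + (-32)*(a0:ℂ)^5*(r:ℂ)^6 + 64*(a0:ℂ)^6*(r:ℂ)^4 + (-4)*w*(a0:ℂ)^3*(r:ℂ)^3 + (-16)*w*(a0:ℂ)^3*(r:ℂ)^5 + (-16)*w*(a0:ℂ)^3*(r:ℂ)^7 + 32*w*(a0:ℂ)^4*(r:ℂ)^5 + (-8)*w^2*(a0:ℂ)^3*(r:ℂ)^4 + (-16)*w^2*(a0:ℂ)^3*(r:ℂ)^6 + 4*w^2*(a0:ℂ)^4*(r:ℂ)^2 + 16*w^2*(a0:ℂ)^4*(r:ℂ)^4 + 16*w^2*(a0:ℂ)^4*(r:ℂ)^6 + (-32)*w^2*(a0:ℂ)^5*(r:ℂ)^4) * hQ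
    have hresR : a0^2*r^5*(4*(1+2*r^2)^3 - 16*a0^2*(1+2*r^2)^2 + 128*a0^3*r^2) = 0 := by
      exact_mod_cast hres
    -- but this quantity is strictly positive
    have hc : (0:ℝ) < 1 + 2*r^2 := by nlinarith
    have hpos : 0 < 4*(1+2*r^2)^3 - 16*a0^2*(1+2*r^2)^2 + 128*a0^3*r^2 := by
      have h1 : 4*(1+2*r^2)^3 - 16*a0^2*(1+2*r^2)^2
          = 4*(1+2*r^2)^2 * ((1+2*r^2) - 4*a0^2) := by ring
      have h2 : 1 + 2*r^2 - 4*a0^2 > 0 := by nlinarith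
      have h3 : 0 < 4*(1+2*r^2)^2 * ((1+2*r^2) - 4*a0^2) := by positivity
      nlinarith [mul_pos (mul_pos (mul_pos ha0pos ha0pos) ha0pos) (pow_pos hr0 2)]
    have : 0 < a0^2*r^5*(4*(1+2*r^2)^3 - 16*a0^2*(1+2*r^2)^2 + 128*a0^3*r^2) := by
      positivity
    linarith [hresR ▸ this]
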